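/- arXiv:2509.08431 — 8 statements merged into one kernel-verified Lean document; each statement's English description precedes it below -/
import Mathlib

section
/- Let u₀ : [0,∞) → ℝ be a C² function satisfying -u₀'' = f(u₀) on (0,∞), where f : [0,∞) → ℝ is continuous. If u₀ is bounded and u₀' is bounded, and u₀ is strictly increasing with u₀ > 0 on (0,∞), then f(sup u₀) = 0. -/
open Set Filter

/-- If u₀ is a C² solution of -u₀'' = f(u₀) on (0,∞), with u₀ and u₀'
bounded, u₀ strictly increasing and positive on (0,∞), and the supremum of u₀ is
attained as the limit at +∞, then f(sup u₀) = 0. -/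
theorem stmt0 (f : ℝ → ℝ) (hf : ContinuousOn f (Ici 0))
    (u₀ : ℝ → ℝ) (hu₀ : ContDiffOn ℝ 2 u₀ (Ioi 0))
    (hval : ∀ t ∈ Ioi (0:ℝ), 0 ≤ u₀ t)
    (hode : ∀ t ∈ Ioi (0:ℝ), - deriv (deriv u₀) t = f (u₀ t))
    (M M' : ℝ)
    (hbd : ∀ t ∈ Ioi (0:ℝ), |u₀ t| ≤ M)
    (hbd' : ∀ t ∈ Ioi (0:ℝ), |deriv u₀ t| ≤ M')
    (hmono : StrictMonoOn u₀ (Ioi 0))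
    (hpos : ∀ t ∈ Ioi (0:ℝ), 0 < u₀ t)
    (hlim : Tendsto u₀ atTop (nhds (sSup (u₀ '' Ioi 0)))) :
    f (sSup (u₀ '' Ioi 0)) = 0 := by
  set L := sSup (u₀ '' Ioi 0) with hL
  by_contra hc
  set c := f L with hcdef
  have hcpos : 0 < |c| := abs_pos.2 hc
  -- L ≥ 0
  have hL0 : 0 ≤ L := by
    have h1 : (1:ℝ) ∈ Ioi (0:ℝ) := by norm_num
    have : u₀ 1 ≤ L := le_csSup ⟨M, by rintro x ⟨t, ht, rfl⟩; exact (abs_le.1 (hbd t ht)).2⟩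
      (mem_image_of_mem _ h1)
    linarith [hpos 1 h1]
  -- M' ≥ 0
  have hM'0 : 0 ≤ M' := le_trans (abs_nonneg _) (hbd' 1 (by norm_num))
  -- f ∘ u₀ tends to c
  have htend : Tendsto (fun t => f (u₀ t)) atTop (nhds c) := by
    have h1 : Tendsto u₀ atTop (nhdsWithin L (Ici 0)) := by
      rw [tendsto_nhdsWithin_iff]
      refine ⟨hlim, ?_⟩
      filter_upwards [eventually_gt_atTop (0:ℝ)] with t ht
      exact hval t ht
    exact (hf.continuousWithinAt (mem_Ici.2 hL0)).tendsto.comp h1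
  -- second derivative tends to -c
  have hgt : Tendsto (deriv (deriv u₀)) atTop (nhds (-c)) := by
    have : Tendsto (fun t => -(f (u₀ t))) atTop (nhds (-c)) := htend.neg
    refine this.congr' ?_
    filter_upwards [eventually_gt_atTop (0:ℝ)] with t ht
    have := hode t ht
    linarith
  -- eventually |u₀''| ≥ |c|/2
  have hev : ∀ᶠ t in atTop, |deriv (deriv u₀) t| ≥ |c| / 2 := by
    have := hgt.eventually (Metric.ball_mem_nhds (-c) (by positivity : (0:ℝ) < |c|/2))
    filter_upwards [this] with t ht
    have h1 : |deriv (deriv u₀) t - (-c)| < |c|/2 := by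
      simpa [Real.dist_eq] using ht
    have h2 : |(-c)| - |deriv (deriv u₀) t| ≤ |deriv (deriv u₀) t - (-c)| := by
      have := abs_sub_abs_le_abs_sub (-c) (deriv (deriv u₀) t)
      simpa [abs_sub_comm] using this
    rw [abs_neg] at h2
    linarith
  obtain ⟨T₀, hT₀⟩ := hev.exists_forall_of_atTop
  set T := max T₀ 1 with hT
  have hT1 : (1:ℝ) ≤ T := le_max_right _ _
  have hTpos : (0:ℝ) < T := by linarith
  -- differentiability of deriv u₀ on Ioi 0
  have hd1 : ContDiffOn ℝ 1 (deriv u₀) (Ioi 0) :=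
    hu₀.deriv_of_isOpen isOpen_Ioi (by norm_num)
  have hdiff : ∀ x ∈ Ioi (0:ℝ), DifferentiableAt ℝ (deriv u₀) x := fun x hx =>
    (hd1.differentiableOn (by norm_num)).differentiableAt (isOpen_Ioi.mem_nhds hx)
  -- MVT bound: for t > T, |u₀' t - u₀' T| ≥ (t - T) * |c|/2
  set t := T + (8 * M' + 8) / |c| with htdef
  have hcne : |c| ≠ 0 := ne_of_gt hcpos
  have htT : T < t := by
    rw [htdef]
    have : 0 < (8 * M' + 8) / |c| := by positivity
    linarith
  obtain ⟨ξ, hξ, hslope⟩ := exists_hasDerivAt_eq_slope (deriv u₀) (deriv (deriv u₀)) htT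
    (fun x hx => (hdiff x (lt_of_lt_of_le hTpos hx.1)).continuousAt.continuousWithinAt)
    (fun x hx => (hdiff x (lt_trans hTpos hx.1)).hasDerivAt)
  have hξT : T ≤ ξ := le_of_lt hξ.1
  have key : (t - T) * (|c| / 2) ≤ |deriv u₀ t - deriv u₀ T| := by
    have h1 : |c|/2 ≤ |deriv (deriv u₀) ξ| := hT₀ ξ (le_trans (le_max_left _ _) hξT)
    rw [hslope, abs_div, abs_of_pos (by linarith : (0:ℝ) < t - T)] at h1
    have h2 := (le_div_iff₀ (by linarith : (0:ℝ) < t - T)).1 h1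
    linarith
  have hb1 : |deriv u₀ t| ≤ M' := hbd' t (mem_Ioi.2 (by linarith))
  have hb2 : |deriv u₀ T| ≤ M' := hbd' T hTpos
  have habs : |deriv u₀ t - deriv u₀ T| ≤ 2 * M' := by
    calc |deriv u₀ t - deriv u₀ T| ≤ |deriv u₀ t| + |deriv u₀ T| := abs_sub _ _
      _ ≤ 2 * M' := by linarith
  have htT' : (t - T) * (|c| / 2) = 4 * M' + 4 := by
    rw [htdef]
    field_simp
    ring
  linarith
end

section
/- Let u₀ : [0,∞) → ℝ be a C² solution of -u₀'' = f(u₀) with u₀(0) = 0, where f : [0,∞) → ℝ is continuous, and suppose there exist constants A > 0 and B ≥ 0 such that f(t) ≥ A·t - B for all t ≥ 0. Then u₀ is bounded on [0,∞). -/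
open Set

/-! Extend `f` continuously to `ℝ` by `f (max x 0)` and let `F` be its primitive vanishing
at `0`. The energy `(u₀')² / 2 + F (u₀)` has derivative `u₀' (u₀'' + f (u₀)) = 0`, so it is a
constant `C` on `(0, ∞)`. Integrating the affine lower bound of `f` gives
`A u₀² / 2 - B u₀ ≤ F (u₀) ≤ C`, and a quadratic with positive leading coefficient stays below
`C` only on a bounded set. -/

theorem exists_le_of_mul_sq_div_two_sub_mul_le {A : ℝ} (hA : 0 < A) (B C : ℝ) :
    ∃ M, ∀ x, A * x ^ 2 / 2 - B * x ≤ C → x ≤ M := by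
  refine ⟨max 1 (2 * (B + |C|) / A), fun x hx => ?_⟩
  by_contra! hM
  have hx1 : 1 < x := (le_max_left _ _).trans_lt hM
  have hAx : 2 * (B + |C|) < A * x := (div_lt_iff₀' hA).1 ((le_max_right _ _).trans_lt hM)
  have : |C| * 1 ≤ |C| * x := mul_le_mul_of_nonneg_left hx1.le (abs_nonneg C)
  nlinarith [le_abs_self C]

theorem mul_sq_div_two_sub_mul_le_integral {g : ℝ → ℝ} {A B u : ℝ} (hu : 0 ≤ u)
    (hg : IntervalIntegrable g MeasureTheory.volume 0 u)
    (hAB : ∀ s ∈ Icc 0 u, A * s - B ≤ g s) :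
    A * u ^ 2 / 2 - B * u ≤ ∫ s in (0 : ℝ)..u, g s := by
  have hint : ∫ s in (0 : ℝ)..u, (A * s - B) = A * u ^ 2 / 2 - B * u := by
    rw [intervalIntegral.integral_sub ((continuous_const_mul A).intervalIntegrable 0 u)
      intervalIntegrable_const, intervalIntegral.integral_const_mul, integral_id,
      intervalIntegral.integral_const, smul_eq_mul]
    ring
  rw [← hint]
  exact intervalIntegral.integral_mono_on hu
    ((by fun_prop : Continuous fun s : ℝ => A * s - B).intervalIntegrable 0 u) hg hAB

theorem exists_energy_eq_of_neg_deriv_deriv_eq {u g F : ℝ → ℝ} {s : Set ℝ} (hs : IsOpen s)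
    (hs' : IsPreconnected s) (hF : ∀ x, HasDerivAt F (g x) x) (hu : ContDiffOn ℝ 2 u s)
    (hode : ∀ t ∈ s, -deriv (deriv u) t = g (u t)) :
    ∃ C, ∀ t ∈ s, deriv u t ^ 2 / 2 + F (u t) = C := by
  have hu' : ContDiffOn ℝ 1 (deriv u) s := hu.deriv_of_isOpen hs (by norm_num)
  have hE : ∀ t ∈ s, HasDerivAt (fun t => deriv u t ^ 2 / 2 + F (u t)) 0 t := by
    intro t ht
    have hu_t : HasDerivAt u (deriv u t) t :=
      ((hu.differentiableOn (by norm_num)).differentiableAt (hs.mem_nhds ht)).hasDerivAt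
    have hu'_t : HasDerivAt (deriv u) (deriv (deriv u) t) t :=
      ((hu'.differentiableOn one_ne_zero).differentiableAt (hs.mem_nhds ht)).hasDerivAt
    refine (((hu'_t.pow 2).div_const 2).add ((hF (u t)).comp t hu_t)).congr_deriv ?_
    rw [← hode t ht]
    ring
  exact hs.exists_is_const_of_deriv_eq_zero hs'
    (fun t ht => (hE t ht).differentiableAt.differentiableWithinAt) fun t ht => (hE t ht).deriv

theorem stmt1_general (f : ℝ → ℝ) (hf : ContinuousOn f (Ici 0))
    (A B : ℝ) (hA : 0 < A)
    (hlin : ∀ t : ℝ, 0 ≤ t → A * t - B ≤ f t)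
    (u₀ : ℝ → ℝ) (hu₀ : ContDiffOn ℝ 2 u₀ (Ici 0))
    (hval : ∀ t ∈ Ici (0:ℝ), 0 ≤ u₀ t)
    (hode : ∀ t ∈ Ioi (0:ℝ), - deriv (deriv u₀) t = f (u₀ t))
    (hzero : u₀ 0 = 0) :
    ∃ M : ℝ, ∀ t ∈ Ici (0:ℝ), u₀ t ≤ M := by
  set g : ℝ → ℝ := fun x => f (max x 0)
  have hg : Continuous g := hf.comp_continuous (by fun_prop) fun x => le_max_right x 0
  have hgf : ∀ x, 0 ≤ x → g x = f x := fun x hx => by simp only [g, max_eq_left hx]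
  obtain ⟨C, hC⟩ := exists_energy_eq_of_neg_deriv_deriv_eq isOpen_Ioi isPreconnected_Ioi
    (fun x => (hg.integral_hasStrictDerivAt 0 x).hasDerivAt) (hu₀.mono Ioi_subset_Ici_self)
    fun t ht => by rw [hgf _ (hval t (mem_Ici.2 ht.le)), hode t ht]
  obtain ⟨M, hM⟩ := exists_le_of_mul_sq_div_two_sub_mul_le hA B C
  refine ⟨max M 0, fun t ht => ?_⟩
  rcases (mem_Ici.1 ht).eq_or_lt with h0 | ht
  · rw [← h0, hzero]
    exact le_max_right M 0
  refine le_max_of_le_left (hM _ ?_)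
  calc A * u₀ t ^ 2 / 2 - B * u₀ t
      ≤ ∫ s in (0 : ℝ)..u₀ t, g s :=
        mul_sq_div_two_sub_mul_le_integral (hval t ht.le) (hg.intervalIntegrable _ _)
          fun s hs => (hgf s hs.1).symm ▸ hlin s hs.1
    _ ≤ deriv u₀ t ^ 2 / 2 + ∫ s in (0 : ℝ)..u₀ t, g s := by
        linarith [sq_nonneg (deriv u₀ t)]
    _ = C := hC t ht

/-- If u₀ is a nonnegative C² solution of -u₀'' = f(u₀) on (0,∞) with
u₀(0) = 0, where f is continuous and f(t) ≥ A·t - B with A > 0, B ≥ 0, then u₀ is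
bounded on [0,∞). -/
theorem stmt1 (f : ℝ → ℝ) (hf : ContinuousOn f (Ici 0))
    (A B : ℝ) (hA : 0 < A) (hB : 0 ≤ B)
    (hlin : ∀ t : ℝ, 0 ≤ t → A * t - B ≤ f t)
    (u₀ : ℝ → ℝ) (hu₀ : ContDiffOn ℝ 2 u₀ (Ici 0))
    (hval : ∀ t ∈ Ici (0:ℝ), 0 ≤ u₀ t)
    (hode : ∀ t ∈ Ioi (0:ℝ), - deriv (deriv u₀) t = f (u₀ t))
    (hzero : u₀ 0 = 0) :
    ∃ M : ℝ, ∀ t ∈ Ici (0:ℝ), u₀ t ≤ M :=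
  stmt1_general f hf A B hA hlin u₀ hu₀ hval hode hzero
end

section
/- For N ≥ 2, the function u(x) = x_N · e^{-x₁} satisfies -Δu = -u in the upper half-space ℝ^N_+, u ≥ 0 in ℝ^N_+, and u = 0 on the boundary {x_N = 0}. In particular, u is positive in ℝ^N_+ and not one-dimensional (it depends nontrivially on x₁). -/
open Set Filter

/-- The Laplacian of `u : ℝ^N → ℝ`, as the sum of the second partial derivatives. -/
noncomputable def lap {N : ℕ} (u : EuclideanSpace ℝ (Fin N) → ℝ)
    (x : EuclideanSpace ℝ (Fin N)) : ℝ :=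
  ∑ i, fderiv ℝ (fun y => fderiv ℝ u y (EuclideanSpace.single i 1)) x
    (EuclideanSpace.single i 1)

/-!
Functions of the form `(a + b x_j) e^{-x_i}` form a family closed under directional
differentiation, so the Hessian of `u = x_j e^{-x_i}` is computed by differentiating twice
within it: `D²u(x)(v, w) = e^{-x_i} (x_j v_i w_i - v_j w_i - v_i w_j)`. Its trace is
`x_j e^{-x_i} - 2 e^{-x_i} [i = j]`, which is `u` as soon as `i ≠ j`. Comparing `u` at `e_j` and
`e_j + e_i` shows that `u` is not a function of `x_j` alone.
-/

open Real

section

variable {ι : Type*} [Fintype ι] (i j : ι)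

theorem hasFDerivAt_affine_mul_exp_neg (a b : ℝ) (x : EuclideanSpace ℝ ι) :
    HasFDerivAt (fun y : EuclideanSpace ℝ ι => (a + b * y j) * exp (-y i))
      ((a + b * x j) • exp (-x i) • -EuclideanSpace.proj (𝕜 := ℝ) i +
        exp (-x i) • b • EuclideanSpace.proj (𝕜 := ℝ) j) x :=
  (((EuclideanSpace.proj j).hasFDerivAt.const_mul b).const_add a).mul
    (EuclideanSpace.proj i).hasFDerivAt.neg.exp

theorem fderiv_affine_mul_exp_neg_apply (a b : ℝ) (x w : EuclideanSpace ℝ ι) :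
    fderiv ℝ (fun y : EuclideanSpace ℝ ι => (a + b * y j) * exp (-y i)) x w
      = exp (-x i) * (b * w j - (a + b * x j) * w i) := by
  rw [(hasFDerivAt_affine_mul_exp_neg i j a b x).fderiv]
  simp only [add_apply, smul_apply, neg_apply, PiLp.proj_apply, smul_eq_mul]
  ring

theorem fderiv_fderiv_mul_exp_neg_apply (x v w : EuclideanSpace ℝ ι) :
    fderiv ℝ (fun y => fderiv ℝ (fun z : EuclideanSpace ℝ ι => z j * exp (-z i)) y v) x w
      = exp (-x i) * (x j * v i * w i - v j * w i - v i * w j) := by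
  have first_derivative :
      (fun y => fderiv ℝ (fun z : EuclideanSpace ℝ ι => z j * exp (-z i)) y v)
        = fun y => (v j + -v i * y j) * exp (-y i) := by
    funext y
    have h := fderiv_affine_mul_exp_neg_apply i j 0 1 y v
    simp only [zero_add, one_mul] at h
    rw [h]
    ring
  rw [first_derivative, fderiv_affine_mul_exp_neg_apply]
  ring

end

theorem lap_mul_exp_neg {N : ℕ} {i j : Fin N} (hij : i ≠ j) (x : EuclideanSpace ℝ (Fin N)) :
    lap (fun z => z j * exp (-z i)) x = x j * exp (-x i) := by
  simp only [lap, fderiv_fderiv_mul_exp_neg_apply, PiLp.single_apply]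
  rw [Finset.sum_eq_single i]
  · simp [hij.symm]
    ring
  · intro k _ hki
    simp [hki.symm]
  · simp

theorem not_exists_mul_exp_neg_eq_comp {ι : Type*} [Fintype ι] {i j : ι} (hij : i ≠ j) :
    ¬ ∃ g : ℝ → ℝ, ∀ x : EuclideanSpace ℝ ι, 0 < x j → x j * exp (-x i) = g (x j) := by
  classical
  rintro ⟨g, hg⟩
  have at_unit := hg (EuclideanSpace.single j 1) (by simp)
  have at_shifted := hg (EuclideanSpace.single j 1 + EuclideanSpace.single i 1) (by simp [hij])
  simp only [PiLp.single_eq_same, ne_eq, hij, not_false_eq_true, PiLp.single_eq_of_ne,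
    neg_zero, exp_zero, mul_one, PiLp.add_apply, hij.symm, add_zero, zero_add, one_mul] at at_unit at_shifted
  have : exp (-1) < 1 := exp_lt_one_iff.mpr (by norm_num)
  linarith

/-- For N ≥ 2, the function `u(x) = x_N · e^{-x₁}` satisfies `-Δu = -u`
in the upper half-space, `u ≥ 0` there, `u = 0` on the boundary, `u > 0` in the
half-space, and `u` is not one-dimensional (it does not depend only on `x_N`). -/
theorem stmt3 (N : ℕ) (hN : 2 ≤ N) (fst lst : Fin N)
    (hfst : (fst : ℕ) = 0) (hlst : (lst : ℕ) = N - 1)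
    (u : EuclideanSpace ℝ (Fin N) → ℝ)
    (hu : u = fun x => x lst * Real.exp (-(x fst))) :
    (∀ x : EuclideanSpace ℝ (Fin N), 0 < x lst → - lap u x = - u x) ∧
    (∀ x : EuclideanSpace ℝ (Fin N), 0 < x lst → 0 ≤ u x) ∧
    (∀ x : EuclideanSpace ℝ (Fin N), x lst = 0 → u x = 0) ∧
    (∀ x : EuclideanSpace ℝ (Fin N), 0 < x lst → 0 < u x) ∧
    ¬ (∃ g : ℝ → ℝ, ∀ x : EuclideanSpace ℝ (Fin N), 0 < x lst → u x = g (x lst)) := by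
  have hne : fst ≠ lst := Fin.ne_of_val_ne (by omega)
  subst hu
  exact ⟨fun x _ => by rw [lap_mul_exp_neg hne], fun x hx => by positivity,
    fun x hx => by simp [hx], fun x hx => by positivity, not_exists_mul_exp_neg_eq_comp hne⟩
end

section
/- For N ≥ 2, the function u(x) = ln(1 + x_N) is a positive solution of -Δu = e^{-2u} in ℝ^N_+ with u = 0 on ∂ℝ^N_+, u is strictly increasing in the x_N direction, and u is unbounded. -/
open Set Filter

/-!
The function depends on `x_N` alone, so its Laplacian is the second derivative of
`g t = log (1 + t)`, namely `-(1 + t)⁻²`, which is exactly `e^{-2 g t}`. The remaining claims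
are properties of the logarithm: `g 0 = 0`, `g' t = (1 + t)⁻¹ > 0`, and `g t → ∞`.
-/

open Topology

section CoordinateFunctions

variable {N : ℕ} {g : ℝ → ℝ} {k : Fin N} {x : EuclideanSpace ℝ (Fin N)}

theorem hasFDerivAt_comp_coord {g' : ℝ} (hg : HasDerivAt g g' (x k)) :
    HasFDerivAt (fun y : EuclideanSpace ℝ (Fin N) => g (y k))
      (g' • EuclideanSpace.proj (𝕜 := ℝ) k) x :=
  hg.comp_hasFDerivAt x (EuclideanSpace.proj (𝕜 := ℝ) k).hasFDerivAt

theorem fderiv_comp_coord_apply {g' : ℝ} (hg : HasDerivAt g g' (x k))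
    (v : EuclideanSpace ℝ (Fin N)) :
    fderiv ℝ (fun y : EuclideanSpace ℝ (Fin N) => g (y k)) x v = g' * v k := by
  rw [(hasFDerivAt_comp_coord hg).fderiv]
  rfl

theorem lap_comp_coord {g' : ℝ → ℝ} {g'' : ℝ}
    (hg : ∀ᶠ t in 𝓝 (x k), HasDerivAt g (g' t) t) (hg' : HasDerivAt g' g'' (x k)) :
    lap (fun y => g (y k)) x = g'' := by
  have hg_near : ∀ᶠ y in 𝓝 x, HasDerivAt g (g' (y k)) (y k) :=
    ((EuclideanSpace.proj (𝕜 := ℝ) k).continuous.tendsto x).eventually hg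
  have hpartial (i : Fin N) :
      (fun y => fderiv ℝ (fun z : EuclideanSpace ℝ (Fin N) => g (z k)) y
          (EuclideanSpace.single i 1)) =ᶠ[𝓝 x]
        fun y => g' (y k) * (EuclideanSpace.single i (1 : ℝ) : EuclideanSpace ℝ (Fin N)) k :=
    hg_near.mono fun y hy => fderiv_comp_coord_apply hy _
  unfold lap
  calc ∑ i, fderiv ℝ (fun y => fderiv ℝ (fun z : EuclideanSpace ℝ (Fin N) => g (z k)) y
          (EuclideanSpace.single i 1)) x (EuclideanSpace.single i 1)
      = ∑ i : Fin N, g'' * (EuclideanSpace.single i (1 : ℝ) : EuclideanSpace ℝ (Fin N)) k *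
          (EuclideanSpace.single i (1 : ℝ) : EuclideanSpace ℝ (Fin N)) k := by
        refine Finset.sum_congr rfl fun i _ => ?_
        rw [(hpartial i).fderiv_eq, ((hasFDerivAt_comp_coord hg').mul_const _).fderiv]
        simp only [FunLike.coe_smul, Pi.smul_apply, smul_eq_mul, EuclideanSpace.coe_proj]
        ring
    _ = g'' := by simp [PiLp.single_apply]

end CoordinateFunctions

section LogOneAdd

variable {t : ℝ}

theorem hasDerivAt_log_one_add (ht : 1 + t ≠ 0) :
    HasDerivAt (fun s => Real.log (1 + s)) (1 + t)⁻¹ t := by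
  simpa using ((hasDerivAt_id t).const_add 1).log ht

theorem hasDerivAt_inv_one_add (ht : 1 + t ≠ 0) :
    HasDerivAt (fun s => (1 + s)⁻¹) (-((1 + t) ^ 2)⁻¹) t :=
  (((hasDerivAt_id t).const_add 1).inv ht).congr_deriv (by simp [neg_div])

theorem lap_log_one_add_coord {N : ℕ} {k : Fin N} {x : EuclideanSpace ℝ (Fin N)}
    (hx : -1 < x k) :
    lap (fun y => Real.log (1 + y k)) x = -((1 + x k) ^ 2)⁻¹ :=
  lap_comp_coord ((lt_mem_nhds hx).mono fun _ hs => hasDerivAt_log_one_add (by linarith))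
    (hasDerivAt_inv_one_add (by linarith))

end LogOneAdd

theorem Real.exp_neg_two_mul_log {a : ℝ} (ha : a ≠ 0) :
    Real.exp (-(2 * Real.log a)) = (a ^ 2)⁻¹ := by
  rw [← Real.exp_log (by positivity : 0 < (a ^ 2)⁻¹), Real.log_inv, Real.log_pow]
  push_cast
  ring_nf

theorem stmt4_general (N : ℕ) (lst : Fin N)
    (u : EuclideanSpace ℝ (Fin N) → ℝ)
    (hu : u = fun x => Real.log (1 + x lst)) :
    (∀ x : EuclideanSpace ℝ (Fin N), 0 < x lst → - lap u x = Real.exp (-(2 * u x))) ∧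
    (∀ x : EuclideanSpace ℝ (Fin N), 0 < x lst → 0 < u x) ∧
    (∀ x : EuclideanSpace ℝ (Fin N), x lst = 0 → u x = 0) ∧
    (∀ x : EuclideanSpace ℝ (Fin N), 0 < x lst →
      0 < fderiv ℝ u x (EuclideanSpace.single lst 1)) ∧
    (∀ M : ℝ, ∃ x : EuclideanSpace ℝ (Fin N), 0 < x lst ∧ M < u x) := by
  subst hu
  refine ⟨fun x hx => ?_, fun x hx => ?_, fun x hx => ?_, fun x hx => ?_, fun M => ?_⟩
  · rw [lap_log_one_add_coord (by linarith), neg_neg, Real.exp_neg_two_mul_log (by linarith)]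
  · exact Real.log_pos (by linarith)
  · simp [hx]
  · rw [fderiv_comp_coord_apply (hasDerivAt_log_one_add (by linarith))]
    simp only [PiLp.single_apply, if_pos, mul_one]
    positivity
  · refine ⟨EuclideanSpace.single lst (Real.exp M), by simp [Real.exp_pos], ?_⟩
    calc M = Real.log (Real.exp M) := (Real.log_exp M).symm
      _ < Real.log (1 + Real.exp M) := Real.log_lt_log (Real.exp_pos M) (by linarith)
      _ = _ := by simp

/-- For N ≥ 2, `u(x) = ln(1 + x_N)` is a positive solution of
`-Δu = e^{-2u}` in the upper half-space with `u = 0` on the boundary; it is strictly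
increasing in the `x_N` direction and unbounded. -/
theorem stmt4 (N : ℕ) (hN : 2 ≤ N) (lst : Fin N) (hlst : (lst : ℕ) = N - 1)
    (u : EuclideanSpace ℝ (Fin N) → ℝ)
    (hu : u = fun x => Real.log (1 + x lst)) :
    (∀ x : EuclideanSpace ℝ (Fin N), 0 < x lst → - lap u x = Real.exp (-(2 * u x))) ∧
    (∀ x : EuclideanSpace ℝ (Fin N), 0 < x lst → 0 < u x) ∧
    (∀ x : EuclideanSpace ℝ (Fin N), x lst = 0 → u x = 0) ∧
    (∀ x : EuclideanSpace ℝ (Fin N), 0 < x lst →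
      0 < fderiv ℝ u x (EuclideanSpace.single lst 1)) ∧
    (∀ M : ℝ, ∃ x : EuclideanSpace ℝ (Fin N), 0 < x lst ∧ M < u x) :=
  stmt4_general N lst u hu
end

section
/- Let N ≥ 4 and p > (N-1)/(N-3). Then there exists c > 0 such that the function u(x', x_N) = c·(1 + |x'|²)^{-1/(p-1)} on ℝ^N_+ (where x' ∈ ℝ^{N-1}) satisfies -Δu ≥ u^p in ℝ^N_+, u > 0 in ℝ^N_+, and ∂u/∂x_N ≡ 0. -/
/-!
Write `S = 1 + |x'|²` and `α = 1 / (p - 1)`. For a function `f (S x)` of the `N - 1` variables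
`x'`, one has `Δ (f ∘ S) = 4 f''(S) (S - 1) + 2 (N - 1) f'(S)`; for `f t = c t^(-α)` this gives
`-Δu = 2α (N - 3 - 2α) c S^(-α-1) + 4α (α + 1) c S^(-α-2)`. As `u^p = c^(p-1) · c S^(-α-1)`,
the inequality `u^p ≤ -Δu` holds once `c^(p-1) ≤ 2α (N - 3 - 2α)`, and this bound is positive
exactly when `p > (N - 1) / (N - 3)`; take `c = (2α (N - 3 - 2α))^α`.
-/

open Set Filter

lemma hasDerivAt_const_mul_rpow (c r : ℝ) {t : ℝ} (ht : 0 < t) :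
    HasDerivAt (fun t => c * t ^ r) (c * (r * t ^ (r - 1))) t :=
  (Real.hasDerivAt_rpow_const (Or.inl ht.ne')).const_mul c

section BracketSq

open Finset

variable {N : ℕ} (s : Finset (Fin N))

noncomputable def bracketSq (x : EuclideanSpace ℝ (Fin N)) : ℝ :=
  1 + ∑ i ∈ s, x i ^ 2

lemma one_le_bracketSq (x : EuclideanSpace ℝ (Fin N)) : 1 ≤ bracketSq s x :=
  le_add_of_nonneg_right (sum_nonneg fun i _ => sq_nonneg (x i))

lemma bracketSq_pos (x : EuclideanSpace ℝ (Fin N)) : 0 < bracketSq s x :=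
  one_pos.trans_le (one_le_bracketSq s x)

lemma hasFDerivAt_bracketSq (x : EuclideanSpace ℝ (Fin N)) :
    HasFDerivAt (bracketSq s) (∑ i ∈ s, (2 * x i) • EuclideanSpace.proj (𝕜 := ℝ) i) x := by
  refine (HasFDerivAt.fun_sum fun i _ => ?_).const_add 1
  simpa [mul_comm] using ((EuclideanSpace.proj (𝕜 := ℝ) i).hasFDerivAt (x := x)).pow 2

variable {s} {f f' f'' : ℝ → ℝ}

lemma fderiv_comp_bracketSq_single (hf : ∀ t, 0 < t → HasDerivAt f (f' t) t)
    (x : EuclideanSpace ℝ (Fin N)) (j : Fin N) :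
    fderiv ℝ (fun y => f (bracketSq s y)) x (EuclideanSpace.single j 1) =
      if j ∈ s then f' (bracketSq s x) * (2 * x j) else 0 := by
  have hfS : HasFDerivAt (fun y => f (bracketSq s y)) _ x :=
    (hf _ (bracketSq_pos s x)).comp_hasFDerivAt x (hasFDerivAt_bracketSq s x)
  rw [hfS.fderiv]
  simp

lemma fderiv_fderiv_comp_bracketSq_single (hf : ∀ t, 0 < t → HasDerivAt f (f' t) t)
    (hf' : ∀ t, 0 < t → HasDerivAt f' (f'' t) t) (x : EuclideanSpace ℝ (Fin N)) (j : Fin N) :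
    fderiv ℝ (fun y => fderiv ℝ (fun z => f (bracketSq s z)) y (EuclideanSpace.single j 1)) x
        (EuclideanSpace.single j 1) =
      if j ∈ s then f'' (bracketSq s x) * (2 * x j) ^ 2 + 2 * f' (bracketSq s x) else 0 := by
  simp_rw [fderiv_comp_bracketSq_single hf]
  split_ifs with hj
  · have hf's : HasFDerivAt (fun y => f' (bracketSq s y)) _ x :=
      (hf' _ (bracketSq_pos s x)).comp_hasFDerivAt x (hasFDerivAt_bracketSq s x)
    have hxj : HasFDerivAt (fun y : EuclideanSpace ℝ (Fin N) => 2 * y j) _ x :=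
      ((EuclideanSpace.proj (𝕜 := ℝ) j).hasFDerivAt (x := x)).const_mul 2
    rw [(hf's.fun_mul hxj).fderiv]
    simp only [add_apply, smul_apply, PiLp.proj_apply, PiLp.single_eq_same, smul_eq_mul,
      mul_one, _root_.sum_apply, PiLp.single_apply, mul_ite, mul_zero, sum_ite_eq', hj,
      ↓reduceIte]
    ring
  · simp

theorem lap_comp_bracketSq (hf : ∀ t, 0 < t → HasDerivAt f (f' t) t)
    (hf' : ∀ t, 0 < t → HasDerivAt f' (f'' t) t) (x : EuclideanSpace ℝ (Fin N)) :
    lap (fun y => f (bracketSq s y)) x =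
      4 * f'' (bracketSq s x) * (bracketSq s x - 1) + 2 * #s * f' (bracketSq s x) := by
  have hS : bracketSq s x - 1 = ∑ i ∈ s, x i ^ 2 := add_sub_cancel_left _ _
  simp only [lap, fderiv_fderiv_comp_bracketSq_single hf hf', sum_ite_mem_eq,
    sum_add_distrib, sum_const, nsmul_eq_mul, hS, mul_sum]
  congr 1
  · exact sum_congr rfl fun i _ => by ring
  · ring

theorem neg_lap_const_mul_rpow_bracketSq (c α : ℝ) (x : EuclideanSpace ℝ (Fin N)) :
    -lap (fun y => c * bracketSq s y ^ (-α)) x =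
      2 * α * (#s - 2 - 2 * α) * c * bracketSq s x ^ (-α - 1) +
        4 * α * (α + 1) * c * bracketSq s x ^ (-α - 2) := by
  have hexp : bracketSq s x ^ (-α - 1) = bracketSq s x ^ (-α - 2) * bracketSq s x := by
    rw [← Real.rpow_add_one (bracketSq_pos s x).ne']
    ring_nf
  rw [lap_comp_bracketSq (fun t ht => hasDerivAt_const_mul_rpow c (-α) ht)
    (fun t ht => (hasDerivAt_const_mul_rpow (-α) (-α - 1) ht).const_mul c) x,
    sub_sub (-α), one_add_one_eq_two, hexp]
  ring

theorem rpow_le_neg_lap_const_mul_rpow_bracketSq {c α p : ℝ} (hc : 0 < c) (hα : 0 < α)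
    (hαp : α * (p - 1) = 1) (hcK : c ^ (p - 1) ≤ 2 * α * (#s - 2 - 2 * α))
    (x : EuclideanSpace ℝ (Fin N)) :
    (c * bracketSq s x ^ (-α)) ^ p ≤ -lap (fun y => c * bracketSq s y ^ (-α)) x := by
  have hS := bracketSq_pos s x
  have hup : (c * bracketSq s x ^ (-α)) ^ p = c ^ (p - 1) * c * bracketSq s x ^ (-α - 1) := by
    rw [Real.mul_rpow hc.le (Real.rpow_nonneg hS.le _), ← Real.rpow_mul hS.le,
      Real.rpow_sub_one hc.ne', div_mul_cancel₀ _ hc.ne']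
    congr 2
    linear_combination -hαp
  rw [hup, neg_lap_const_mul_rpow_bracketSq]
  have hrest : 0 ≤ 4 * α * (α + 1) * c * bracketSq s x ^ (-α - 2) := by positivity
  have hmain := mul_le_mul_of_nonneg_right hcK (mul_pos hc (Real.rpow_pos_of_pos hS (-α - 1))).le
  linarith

end BracketSq

theorem stmt5_general (N : ℕ) (hN : 4 ≤ N) (lst : Fin N)
    (p : ℝ) (hp : ((N : ℝ) - 1) / ((N : ℝ) - 3) < p) :
    ∃ c : ℝ, 0 < c ∧
      ∀ u : EuclideanSpace ℝ (Fin N) → ℝ,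
        (u = fun x =>
          c * (1 + ∑ i ∈ Finset.univ.erase lst, (x i) ^ 2) ^ (-(1 / (p - 1)) : ℝ)) →
        (∀ x : EuclideanSpace ℝ (Fin N), 0 < x lst → (u x) ^ p ≤ - lap u x) ∧
        (∀ x : EuclideanSpace ℝ (Fin N), 0 < x lst → 0 < u x) ∧
        (∀ x : EuclideanSpace ℝ (Fin N),
          fderiv ℝ u x (EuclideanSpace.single lst 1) = 0) := by
  set s := Finset.univ.erase lst
  set α := 1 / (p - 1)
  have hN3 : (0 : ℝ) < N - 3 := by
    have : (4 : ℝ) ≤ N := by exact_mod_cast hN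
    linarith
  have hpN : N - 1 < p * (N - 3) := (div_lt_iff₀ hN3).mp hp
  have hp1 : 0 < p - 1 := by nlinarith
  have hα : 0 < α := by positivity
  have hαp : α * (p - 1) = 1 := one_div_mul_cancel hp1.ne'
  have hs : (s.card : ℝ) = N - 1 := by
    rw [Finset.card_erase_of_mem (Finset.mem_univ lst), Finset.card_univ, Fintype.card_fin,
      Nat.cast_sub (by omega), Nat.cast_one]
  set K := 2 * α * (s.card - 2 - 2 * α)
  have hK : 0 < K := by
    refine mul_pos (by positivity) ?_
    rw [hs]
    have : 2 * α < N - 3 := by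
      rw [show 2 * α = 2 / (p - 1) by ring, div_lt_iff₀ hp1]
      linarith
    linarith
  refine ⟨K ^ α, Real.rpow_pos_of_pos hK α, fun u hu => ?_⟩
  subst hu
  refine ⟨fun x _ => ?_, fun x _ => ?_, fun x => ?_⟩
  · refine rpow_le_neg_lap_const_mul_rpow_bracketSq (Real.rpow_pos_of_pos hK α) hα hαp ?_ x
    rw [← Real.rpow_mul hK.le, hαp, Real.rpow_one]
  · exact mul_pos (Real.rpow_pos_of_pos hK α) (Real.rpow_pos_of_pos (bracketSq_pos s x) _)
  · exact (fderiv_comp_bracketSq_single (fun t ht => hasDerivAt_const_mul_rpow _ (-α) ht) x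
      lst).trans (if_neg (Finset.notMem_erase lst _))

/-- For N ≥ 4 and p > (N-1)/(N-3), there is c > 0 such that
`u(x) = c (1 + |x'|²)^{-1/(p-1)}` (with `x'` the first N-1 coordinates) satisfies
`-Δu ≥ u^p` in the upper half-space, `u > 0` there, and `∂u/∂x_N ≡ 0`. -/
theorem stmt5 (N : ℕ) (hN : 4 ≤ N) (lst : Fin N) (hlst : (lst : ℕ) = N - 1)
    (p : ℝ) (hp : ((N : ℝ) - 1) / ((N : ℝ) - 3) < p) :
    ∃ c : ℝ, 0 < c ∧
      ∀ u : EuclideanSpace ℝ (Fin N) → ℝ,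
        (u = fun x =>
          c * (1 + ∑ i ∈ Finset.univ.erase lst, (x i) ^ 2) ^ (-(1 / (p - 1)) : ℝ)) →
        (∀ x : EuclideanSpace ℝ (Fin N), 0 < x lst → (u x) ^ p ≤ - lap u x) ∧
        (∀ x : EuclideanSpace ℝ (Fin N), 0 < x lst → 0 < u x) ∧
        (∀ x : EuclideanSpace ℝ (Fin N),
          fderiv ℝ u x (EuclideanSpace.single lst 1) = 0) :=
  stmt5_general N hN lst p hp
end

section
/- Let ū : ℝ → ℝ be a C² function satisfying -ū'' ≥ A·ū - B on ℝ with constants A > 0, B ≥ 0, and suppose ū solves -ū'' = f(ū) for a continuous f with antiderivative F(u) = ∫₀ᵘ f. Then ū is bounded on ℝ. -/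
open Set intervalIntegral

/-!
Extend `f` continuously to all of `ℝ`. The energy `ū'²/2 + ∫_{ū 0}^{ū} f` is conserved, so
`∫_{ū 0}^{ū t} f ≤ ū'(0)²/2`. Every value between `ū 0` and `ū t` is attained by `ū`, where
`f ≥ A x - B`; integrating this lower bound gives `A ū(t)²/2 - B ū(t) ≤ const` whenever
`ū t ≥ ū 0`, and a quadratic with positive leading coefficient bounded above has bounded argument.
-/

section Energy

variable {g u : ℝ → ℝ}

theorem hasDerivAt_energy_of_neg_deriv_deriv_eq (hg : Continuous g) (hu : ContDiff ℝ 2 u)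
    (hode : ∀ t, -deriv (deriv u) t = g (u t)) (a t : ℝ) :
    HasDerivAt (fun τ ↦ deriv u τ ^ 2 / 2 + ∫ x in a..u τ, g x) 0 t := by
  have hu' : ContDiff ℝ 1 (deriv u) :=
    ((contDiff_succ_iff_deriv (n := 1)).mp (by simpa [one_add_one_eq_two] using hu)).2.2
  have hkin : HasDerivAt (fun τ ↦ deriv u τ ^ 2 / 2) (deriv u t * deriv (deriv u) t) t := by
    refine (((hu'.differentiable one_ne_zero t).hasDerivAt.pow 2).div_const 2).congr_deriv ?_
    ring
  have hpot : HasDerivAt (fun τ ↦ ∫ x in a..u τ, g x) (g (u t) * deriv u t) t :=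
    (hg.integral_hasStrictDerivAt a (u t)).hasDerivAt.comp t
      (hu.differentiable two_ne_zero t).hasDerivAt
  refine (hkin.add hpot).congr_deriv ?_
  rw [← hode t]
  ring

theorem integral_eq_of_neg_deriv_deriv_eq (hg : Continuous g) (hu : ContDiff ℝ 2 u)
    (hode : ∀ t, -deriv (deriv u) t = g (u t)) (s t : ℝ) :
    ∫ x in u s..u t, g x = (deriv u s ^ 2 - deriv u t ^ 2) / 2 := by
  have hconst := is_const_of_deriv_eq_zero
    (fun τ ↦ (hasDerivAt_energy_of_neg_deriv_deriv_eq hg hu hode (u s) τ).differentiableAt)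
    (fun τ ↦ (hasDerivAt_energy_of_neg_deriv_deriv_eq hg hu hode (u s) τ).deriv) t s
  simp only [integral_same] at hconst
  linarith

end Energy

theorem le_of_mul_sq_div_two_sub_mul_le {A B c x : ℝ} (hA : 0 < A)
    (h : A * x ^ 2 / 2 - B * x ≤ c) :
    x ≤ (B + √(B ^ 2 + 2 * A * c)) / A := by
  have hsq : (A * x - B) ^ 2 ≤ B ^ 2 + 2 * A * c := by nlinarith
  rw [le_div_iff₀ hA]
  linarith [le_abs_self (A * x - B), Real.abs_le_sqrt hsq]

theorem integral_linear_le_integral_of_forall_le {g u : ℝ → ℝ} {A B : ℝ} (hg : Continuous g)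
    (hu : Continuous u) (hle : ∀ t, A * u t - B ≤ g (u t)) {s t : ℝ} (hst : u s ≤ u t) :
    A * (u t ^ 2 - u s ^ 2) / 2 - B * (u t - u s) ≤ ∫ x in u s..u t, g x := by
  have hlin : ∫ x in u s..u t, (A * x - B) = A * (u t ^ 2 - u s ^ 2) / 2 - B * (u t - u s) := by
    rw [integral_sub (intervalIntegrable_id.const_mul A) intervalIntegrable_const,
      integral_const_mul, integral_id, integral_const, smul_eq_mul]
    ring
  rw [← hlin]
  refine integral_mono_on hst ((continuous_const.mul continuous_id).sub continuous_const
    |>.intervalIntegrable _ _) (hg.intervalIntegrable _ _) fun x hx ↦ ?_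
  obtain ⟨τ, -, rfl⟩ := intermediate_value_uIcc hu.continuousOn (a := s) (b := t)
    (by rwa [uIcc_of_le hst])
  exact hle τ

theorem bddAbove_range_of_neg_deriv_deriv_eq {g u : ℝ → ℝ} {A B : ℝ} (hA : 0 < A)
    (hg : Continuous g) (hu : ContDiff ℝ 2 u) (hode : ∀ t, -deriv (deriv u) t = g (u t))
    (hle : ∀ t, A * u t - B ≤ g (u t)) :
    BddAbove (range u) := by
  set c := deriv u 0 ^ 2 / 2 + A * u 0 ^ 2 / 2 - B * u 0 with hc
  refine ⟨max (u 0) ((B + √(B ^ 2 + 2 * A * c)) / A), forall_mem_range.mpr fun t ↦ ?_⟩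
  rcases le_total (u t) (u 0) with hle0 | h0le
  · exact le_max_of_le_left hle0
  · refine le_max_of_le_right (le_of_mul_sq_div_two_sub_mul_le hA ?_)
    have hlow := integral_linear_le_integral_of_forall_le hg hu.continuous hle h0le
    have henergy := integral_eq_of_neg_deriv_deriv_eq hg hu hode 0 t
    rw [hc]
    linarith [sq_nonneg (deriv u t)]

theorem stmt8_general (f : ℝ → ℝ) (hf : ContinuousOn f (Ici 0))
    (A B : ℝ) (hA : 0 < A)
    (ubar : ℝ → ℝ) (hC2 : ContDiff ℝ 2 ubar)
    (hnn : ∀ t : ℝ, 0 ≤ ubar t)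
    (hode : ∀ t : ℝ, - deriv (deriv ubar) t = f (ubar t))
    (hineq : ∀ t : ℝ, A * ubar t - B ≤ - deriv (deriv ubar) t) :
    ∃ M : ℝ, ∀ t : ℝ, |ubar t| ≤ M := by
  set g : ℝ → ℝ := fun x ↦ f (max x 0)
  have hg : Continuous g :=
    hf.comp_continuous (continuous_id.max continuous_const) fun x ↦ le_max_right x 0
  have hgu : ∀ t, g (ubar t) = f (ubar t) := fun t ↦ by simp only [g, max_eq_left (hnn t)]
  have hodeg : ∀ t, -deriv (deriv ubar) t = g (ubar t) := fun t ↦ (hode t).trans (hgu t).symm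
  obtain ⟨M, hM⟩ := bddAbove_range_of_neg_deriv_deriv_eq hA hg hC2 hodeg
    fun t ↦ (hineq t).trans_eq (hodeg t)
  exact ⟨M, fun t ↦ (abs_of_nonneg (hnn t)).trans_le (hM (mem_range_self t))⟩

/-- If ū is a nonnegative C² function on ℝ solving -ū'' = f(ū) for a
continuous f, and satisfying -ū'' ≥ A·ū - B with A > 0, B ≥ 0, then ū is bounded. -/
theorem stmt8 (f : ℝ → ℝ) (hf : ContinuousOn f (Ici 0))
    (A B : ℝ) (hA : 0 < A) (hB : 0 ≤ B)
    (ubar : ℝ → ℝ) (hC2 : ContDiff ℝ 2 ubar)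
    (hnn : ∀ t : ℝ, 0 ≤ ubar t)
    (hode : ∀ t : ℝ, - deriv (deriv ubar) t = f (ubar t))
    (hineq : ∀ t : ℝ, A * ubar t - B ≤ - deriv (deriv ubar) t) :
    ∃ M : ℝ, ∀ t : ℝ, |ubar t| ≤ M :=
  stmt8_general f hf A B hA ubar hC2 hnn hode hineq
end

section
/- Let N ≥ 2 and suppose u ∈ C²(ℝ^N_+) is positive and satisfies -Δu ≥ u in ℝ^N_+. Then a contradiction arises: for every open ball B compactly contained in ℝ^N_+, the first Dirichlet eigenvalue λ₁(B) of -Δ satisfies λ₁(B) ≥ 1; but λ₁ of a ball of radius R equals λ₁(B(0,1))/R², which tends to 0 as R → ∞. Hence there is no positive C² solution of -Δu ≥ u in ℝ^N_+; equivalently, any nonnegative C² solution of -Δu ≥ u in ℝ^N_+ is identically zero. -/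
open Set Filter

open Finset Real MeasureTheory

/-! Fix `x₀` in the half-space and a cube `Q` of half-width `L = π / (2ε)` inside the half-space
with `x₀` in its interior, where `N ε² < 1`. The product of cosines `φ = ∏ cos (ε (x_j - c_j))`
is a Dirichlet eigenfunction of `Q` with eigenvalue `N ε²`: it is positive inside `Q`, vanishes
on `∂Q`, and its outward normal derivative there is `≤ 0`. By the divergence theorem applied to
the field `u ∇φ - φ ∇u` on `Q`, the boundary term is `≤ 0` because `u ≥ 0`, while the divergence
`u Δφ - φ Δu` is at least `(1 - N ε²) u φ`. Hence `∫_Q u φ ≤ 0`, so the continuous nonnegative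
function `u φ` vanishes inside `Q`, in particular `u x₀ = 0`. -/

-- Mathlib's divergence theorem on boxes lives on `Fin (n + 1) → ℝ`, hence these coordinates.
noncomputable def partialDeriv {n : ℕ} (i : Fin n) (f : (Fin n → ℝ) → ℝ) (x : Fin n → ℝ) : ℝ :=
  fderiv ℝ f x (Pi.single i 1)

noncomputable def lapPi {n : ℕ} (f : (Fin n → ℝ) → ℝ) (x : Fin n → ℝ) : ℝ :=
  ∑ i, partialDeriv i (partialDeriv i f) x

theorem lap_eq_lapPi {N : ℕ} (u : EuclideanSpace ℝ (Fin N) → ℝ) (x : Fin N → ℝ) :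
    lap u ((EuclideanSpace.equiv (Fin N) ℝ).symm x) =
      lapPi (u ∘ (EuclideanSpace.equiv (Fin N) ℝ).symm) x := by
  set e := (EuclideanSpace.equiv (Fin N) ℝ).symm
  have hpartial (i : Fin N) :
      partialDeriv i (u ∘ e) = fun y => fderiv ℝ u (e y) (EuclideanSpace.single i 1) := by
    ext y
    rw [partialDeriv, e.comp_right_fderiv]
    rfl
  refine sum_congr rfl fun i _ => ?_
  rw [hpartial, partialDeriv, show (fun y => fderiv ℝ u (e y) (EuclideanSpace.single i 1)) =
    (fun z => fderiv ℝ u z (EuclideanSpace.single i 1)) ∘ e from rfl, e.comp_right_fderiv]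
  rfl

noncomputable def greenField {n : ℕ} (f g : (Fin n → ℝ) → ℝ) (i : Fin n) (x : Fin n → ℝ) : ℝ :=
  f x * partialDeriv i g x - g x * partialDeriv i f x

section Calculus

variable {n : ℕ} {f g : (Fin n → ℝ) → ℝ} {x : Fin n → ℝ}

theorem ContDiffAt.differentiableAt_partialDeriv (hf : ContDiffAt ℝ 2 f x) (i : Fin n) :
    DifferentiableAt ℝ (partialDeriv i f) x :=
  ((hf.fderiv_right (m := 1) le_rfl).differentiableAt one_ne_zero).clm_apply
    (differentiableAt_const _)

theorem ContDiffOn.partialDeriv {U : Set (Fin n → ℝ)} {k m : WithTop ℕ∞}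
    (hf : ContDiffOn ℝ k f U) (hU : IsOpen U) (hmk : m + 1 ≤ k) (i : Fin n) :
    ContDiffOn ℝ m (partialDeriv i f) U :=
  (hf.fderiv_of_isOpen hU hmk).clm_apply contDiffOn_const

theorem ContDiffOn.continuousOn_lapPi {U : Set (Fin n → ℝ)} (hf : ContDiffOn ℝ 2 f U)
    (hU : IsOpen U) : ContinuousOn (lapPi f) U :=
  continuousOn_finsetSum _ fun i _ =>
    ((hf.partialDeriv hU (m := 1) (by norm_num) i).partialDeriv hU (m := 0) (by norm_num)
      i).continuousOn

theorem partialDeriv_eq_deriv_update (hf : DifferentiableAt ℝ f x) (i : Fin n) :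
    partialDeriv i f x = deriv (fun t => f (Function.update x i t)) (x i) := by
  have hf' : DifferentiableAt ℝ f (Function.update x i (x i)) := by
    rwa [Function.update_eq_self]
  have h := (hf'.hasFDerivAt.comp_hasDerivAt (x i) (hasDerivAt_update x i (x i))).deriv
  rw [Function.update_eq_self] at h
  exact h.symm

theorem partialDeriv_mul_prod_erase {h h' : ℝ → ℝ} {g : Fin n → ℝ → ℝ}
    (hh : ∀ t, HasDerivAt h (h' t) t) (hg : ∀ j, Differentiable ℝ (g j)) (i : Fin n) :
    partialDeriv i (fun y => h (y i) * ∏ j ∈ univ.erase i, g j (y j)) x =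
      h' (x i) * ∏ j ∈ univ.erase i, g j (x j) := by
  have hdiff : DifferentiableAt ℝ (fun y => h (y i) * ∏ j ∈ univ.erase i, g j (y j)) x := by
    have := fun t => (hh t).differentiableAt
    fun_prop
  rw [partialDeriv_eq_deriv_update hdiff]
  have hslice : (fun t => h (Function.update x i t i) *
      ∏ j ∈ univ.erase i, g j (Function.update x i t j)) =
      fun t => h t * ∏ j ∈ univ.erase i, g j (x j) := by
    ext t
    rw [Function.update_self]
    congr 1
    exact prod_congr rfl fun j hj => by rw [Function.update_of_ne (ne_of_mem_erase hj)]
  rw [hslice, deriv_mul_const (hh _).differentiableAt, (hh _).deriv]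

theorem ContDiffAt.differentiableAt_greenField (hf : ContDiffAt ℝ 2 f x)
    (hg : ContDiffAt ℝ 2 g x) (i : Fin n) : DifferentiableAt ℝ (greenField f g i) x :=
  ((hf.differentiableAt two_ne_zero).mul (hg.differentiableAt_partialDeriv i)).sub
    ((hg.differentiableAt two_ne_zero).mul (hf.differentiableAt_partialDeriv i))

theorem sum_partialDeriv_greenField (hf : ContDiffAt ℝ 2 f x) (hg : ContDiffAt ℝ 2 g x) :
    ∑ i, partialDeriv i (greenField f g i) x = f x * lapPi g x - g x * lapPi f x := by
  have hf1 := hf.differentiableAt two_ne_zero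
  have hg1 := hg.differentiableAt two_ne_zero
  rw [lapPi, lapPi, mul_sum, mul_sum, ← sum_sub_distrib]
  refine sum_congr rfl fun i _ => ?_
  have hfi := hf.differentiableAt_partialDeriv i
  have hgi := hg.differentiableAt_partialDeriv i
  have hfgi : DifferentiableAt ℝ (fun y => f y * partialDeriv i g y) x := hf1.mul hgi
  have hgfi : DifferentiableAt ℝ (fun y => g y * partialDeriv i f y) x := hg1.mul hfi
  unfold greenField
  rw [partialDeriv, fderiv_fun_sub hfgi hgfi, fderiv_fun_mul hf1 hgi,
    fderiv_fun_mul hg1 hfi]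
  simp only [sub_apply, add_apply, smul_apply, smul_eq_mul]
  rw [partialDeriv, partialDeriv, partialDeriv, partialDeriv]
  ring

end Calculus

section CosBump

variable {n : ℕ} (ε : ℝ) (c : Fin n → ℝ)

noncomputable def cosBump (x : Fin n → ℝ) : ℝ := ∏ j, cos (ε * (x j - c j))

theorem hasDerivAt_cos_mul_sub (a t : ℝ) :
    HasDerivAt (fun t => cos (ε * (t - a))) (-ε * sin (ε * (t - a))) t := by
  have h := (((hasDerivAt_id t).sub_const a).const_mul ε).cos
  simp only [id, mul_one] at h
  exact h.congr_deriv (by ring)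

theorem differentiable_cos_mul_sub (a : ℝ) : Differentiable ℝ fun t => cos (ε * (t - a)) :=
  fun t => (hasDerivAt_cos_mul_sub ε a t).differentiableAt

theorem hasDerivAt_neg_mul_sin_mul_sub (a t : ℝ) :
    HasDerivAt (fun t => -ε * sin (ε * (t - a))) (-ε ^ 2 * cos (ε * (t - a))) t := by
  have h := ((((hasDerivAt_id t).sub_const a).const_mul ε).sin).const_mul (-ε)
  simp only [id, mul_one] at h
  exact h.congr_deriv (by ring)

theorem cosBump_eq_mul_prod_erase (i : Fin n) :
    cosBump ε c = fun x => cos (ε * (x i - c i)) * ∏ j ∈ univ.erase i, cos (ε * (x j - c j)) := by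
  ext x
  exact (mul_prod_erase univ _ (mem_univ i)).symm

theorem contDiff_cosBump : ContDiff ℝ 2 (cosBump ε c) := by
  unfold cosBump
  fun_prop

theorem partialDeriv_cosBump (i : Fin n) :
    partialDeriv i (cosBump ε c) =
      fun x => -ε * sin (ε * (x i - c i)) * ∏ j ∈ univ.erase i, cos (ε * (x j - c j)) := by
  ext x
  rw [cosBump_eq_mul_prod_erase ε c i]
  exact partialDeriv_mul_prod_erase (g := fun j t => cos (ε * (t - c j)))
    (hasDerivAt_cos_mul_sub ε (c i)) (fun j => differentiable_cos_mul_sub ε (c j)) i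

theorem lapPi_cosBump (x : Fin n → ℝ) : lapPi (cosBump ε c) x = -(n * ε ^ 2) * cosBump ε c x := by
  have h (i : Fin n) :
      partialDeriv i (partialDeriv i (cosBump ε c)) x = -ε ^ 2 * cosBump ε c x := by
    rw [partialDeriv_cosBump, partialDeriv_mul_prod_erase (g := fun j t => cos (ε * (t - c j)))
      (hasDerivAt_neg_mul_sin_mul_sub ε (c i)) (fun j => differentiable_cos_mul_sub ε (c j)) i,
      cosBump_eq_mul_prod_erase ε c i, mul_assoc]
  rw [lapPi, sum_congr rfl fun i _ => h i, sum_const, card_univ, Fintype.card_fin, nsmul_eq_mul]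
  ring

end CosBump

def cube {n : ℕ} (c : Fin n → ℝ) (L : ℝ) : Set (Fin n → ℝ) :=
  Icc (fun j => c j - L) (fun j => c j + L)

theorem abs_sub_le_of_mem_cube {n : ℕ} {c x : Fin n → ℝ} {L : ℝ} (hx : x ∈ cube c L)
    (j : Fin n) : |x j - c j| ≤ L :=
  abs_sub_le_iff.2 ⟨by linarith [hx.2 j], by linarith [hx.1 j]⟩

theorem mem_interior_cube {n : ℕ} {c x : Fin n → ℝ} {L : ℝ} (hx : ∀ j, |x j - c j| < L) :
    x ∈ interior (cube c L) := by
  rw [cube, ← pi_univ_Icc, interior_pi_set finite_univ]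
  intro j _
  dsimp only
  rw [interior_Icc]
  have := abs_sub_lt_iff.1 (hx j)
  constructor <;> linarith

section CubeBump

variable {n : ℕ} {ε L : ℝ} {c x : Fin n → ℝ}

theorem pos_of_mul_eq_pi_div_two (hε : 0 < ε) (hεL : ε * L = π / 2) : 0 < L :=
  pos_of_mul_pos_right (hεL ▸ by positivity) hε.le

theorem cos_nonneg_of_mem_cube (hε : 0 < ε) (hεL : ε * L = π / 2) (hx : x ∈ cube c L)
    (j : Fin n) : 0 ≤ cos (ε * (x j - c j)) := by
  rw [← cos_abs, abs_mul, abs_of_pos hε]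
  refine cos_nonneg_of_mem_Icc ⟨by linarith [pi_pos, mul_nonneg hε.le (abs_nonneg (x j - c j))], ?_⟩
  rw [← hεL]
  exact mul_le_mul_of_nonneg_left (abs_sub_le_of_mem_cube hx j) hε.le

theorem cosBump_nonneg (hε : 0 < ε) (hεL : ε * L = π / 2) (hx : x ∈ cube c L) :
    0 ≤ cosBump ε c x :=
  prod_nonneg fun j _ => cos_nonneg_of_mem_cube hε hεL hx j

theorem cosBump_pos (hε : 0 < ε) (hεL : ε * L = π / 2) (hx : ∀ j, |x j - c j| < L) :
    0 < cosBump ε c x := by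
  refine prod_pos fun j _ => ?_
  rw [← cos_abs, abs_mul, abs_of_pos hε]
  refine cos_pos_of_mem_Ioo ⟨by linarith [pi_pos, mul_nonneg hε.le (abs_nonneg (x j - c j))], ?_⟩
  rw [← hεL]
  exact mul_lt_mul_of_pos_left (hx j) hε

theorem cosBump_eq_zero (hε : 0 < ε) (hεL : ε * L = π / 2) {i : Fin n}
    (hxi : |x i - c i| = L) : cosBump ε c x = 0 := by
  refine prod_eq_zero (mem_univ i) ?_
  rw [← cos_abs, abs_mul, abs_of_pos hε, hxi, hεL, cos_pi_div_two]

theorem greenField_cosBump_nonpos_of_upper {v : (Fin n → ℝ) → ℝ} (hε : 0 < ε)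
    (hεL : ε * L = π / 2) (hx : x ∈ cube c L) {i : Fin n} (hxi : x i = c i + L)
    (hv : 0 ≤ v x) : greenField v (cosBump ε c) i x ≤ 0 := by
  have hL : 0 < L := pos_of_mul_eq_pi_div_two hε hεL
  rw [greenField, cosBump_eq_zero hε hεL (by rw [hxi, add_sub_cancel_left, abs_of_pos hL]),
    partialDeriv_cosBump]
  beta_reduce
  rw [hxi, add_sub_cancel_left, hεL, sin_pi_div_two, zero_mul, sub_zero]
  have := mul_nonneg (mul_nonneg hv hε.le)
    (prod_nonneg fun j (_ : j ∈ univ.erase i) => cos_nonneg_of_mem_cube hε hεL hx j)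
  linarith

theorem greenField_cosBump_nonneg_of_lower {v : (Fin n → ℝ) → ℝ} (hε : 0 < ε)
    (hεL : ε * L = π / 2) (hx : x ∈ cube c L) {i : Fin n} (hxi : x i = c i - L)
    (hv : 0 ≤ v x) : 0 ≤ greenField v (cosBump ε c) i x := by
  have hL : 0 < L := pos_of_mul_eq_pi_div_two hε hεL
  rw [greenField, cosBump_eq_zero hε hεL (by rw [hxi, sub_sub_cancel_left, abs_neg, abs_of_pos hL]),
    partialDeriv_cosBump]
  beta_reduce
  rw [hxi, sub_sub_cancel_left, mul_neg, hεL, sin_neg, sin_pi_div_two, zero_mul, sub_zero]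
  have := mul_nonneg (mul_nonneg hv hε.le)
    (prod_nonneg fun j (_ : j ∈ univ.erase i) => cos_nonneg_of_mem_cube hε hεL hx j)
  linarith

end CubeBump

theorem setIntegral_pos_of_mem_interior {X : Type*} [TopologicalSpace X] [MeasurableSpace X]
    {μ : Measure X} [μ.IsOpenPosMeasure] {f : X → ℝ} {s : Set X} (hs : MeasurableSet s)
    (hf : ContinuousOn f s) (hfi : IntegrableOn f s μ) (hnn : ∀ x ∈ s, 0 ≤ f x) {x : X}
    (hx : x ∈ interior s)
    (hfx : f x ≠ 0) : 0 < ∫ y in s, f y ∂μ := by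
  refine (setIntegral_pos_iff_support_of_nonneg_ae (ae_restrict_of_forall_mem hs hnn) hfi).2 ?_
  have hopen : IsOpen (interior s ∩ f ⁻¹' {0}ᶜ) :=
    (hf.mono interior_subset).isOpen_inter_preimage isOpen_interior isOpen_compl_singleton
  refine (hopen.measure_pos μ ⟨x, hx, hfx⟩).trans_le (measure_mono ?_)
  exact fun y hy => ⟨hy.2, interior_subset hy.1⟩

theorem divergence_greenField_cosBump {n : ℕ} {v : (Fin n → ℝ) → ℝ} {x : Fin n → ℝ}
    (hv : ContDiffAt ℝ 2 v x) (ε : ℝ) (c : Fin n → ℝ) :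
    ∑ i, partialDeriv i (greenField v (cosBump ε c) i) x =
      -(n * ε ^ 2) * (v x * cosBump ε c x) - cosBump ε c x * lapPi v x := by
  rw [sum_partialDeriv_greenField hv (contDiff_cosBump ε c).contDiffAt, lapPi_cosBump]
  ring

section Cube

variable {n : ℕ} {v : (Fin (n + 1) → ℝ) → ℝ} {U : Set (Fin (n + 1) → ℝ)} {ε L μ : ℝ}
  {c : Fin (n + 1) → ℝ}

theorem integral_divergence_greenField_cosBump_nonpos (hU : IsOpen U) (hv : ContDiffOn ℝ 2 v U)
    (hQ : cube c L ⊆ U) (hε : 0 < ε) (hεL : ε * L = π / 2) (hnn : ∀ x ∈ cube c L, 0 ≤ v x)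
    (hi : IntegrableOn (fun x => ∑ i, partialDeriv i (greenField v (cosBump ε c) i) x)
      (cube c L)) :
    ∫ x in cube c L, ∑ i, partialDeriv i (greenField v (cosBump ε c) i) x ≤ 0 := by
  have hL : 0 < L := pos_of_mul_eq_pi_div_two hε hεL
  have hab : (fun j => c j - L) ≤ fun j => c j + L := fun j => by linarith
  have hcont (i : Fin (n + 1)) : ContinuousOn (greenField v (cosBump ε c) i) (cube c L) := by
    have hφ := (contDiff_cosBump ε c).continuous_fderiv (by norm_num)
    refine ((hv.continuousOn.mul (hφ.clm_apply continuous_const).continuousOn).sub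
      ((contDiff_cosBump ε c).continuous.continuousOn.mul ?_)).mono hQ
    exact (hv.partialDeriv hU (m := 0) (by norm_num) i).continuousOn
  have hdiff : ∀ x ∈ (univ.pi fun j => Ioo (c j - L) (c j + L)) \ ∅, ∀ i,
      HasFDerivAt (greenField v (cosBump ε c) i)
        (fderiv ℝ (greenField v (cosBump ε c) i) x) x := by
    intro x hx i
    have hxQ : x ∈ cube c L := by
      rw [cube, ← pi_univ_Icc]
      exact fun j _ => Ioo_subset_Icc_self (hx.1 j trivial)
    exact ((hv.contDiffAt (hU.mem_nhds (hQ hxQ))).differentiableAt_greenField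
      (contDiff_cosBump ε c).contDiffAt i).hasFDerivAt
  refine (integral_divergence_of_hasFDerivAt_off_countable' _ _ hab _ _ ∅ countable_empty hcont
    hdiff hi).trans_le (sum_nonpos ?_)
  intro i _
  refine sub_nonpos.2 ?_
  refine (setIntegral_nonpos measurableSet_Icc fun y hy => ?_).trans
    (setIntegral_nonneg measurableSet_Icc fun y hy => ?_)
  · have hz : i.insertNth (c i + L) y ∈ cube c L :=
      Fin.insertNth_mem_Icc.2 ⟨⟨hab i, le_rfl⟩, hy⟩
    exact greenField_cosBump_nonpos_of_upper hε hεL hz (Fin.insertNth_apply_same _ _ _)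
      (hnn _ hz)
  · have hz : i.insertNth (c i - L) y ∈ cube c L :=
      Fin.insertNth_mem_Icc.2 ⟨⟨le_rfl, hab i⟩, hy⟩
    exact greenField_cosBump_nonneg_of_lower hε hεL hz (Fin.insertNth_apply_same _ _ _)
      (hnn _ hz)

theorem integral_mul_cosBump_nonpos (hU : IsOpen U) (hv : ContDiffOn ℝ 2 v U)
    (hQ : cube c L ⊆ U) (hε : 0 < ε) (hεL : ε * L = π / 2) (hμ : (n + 1) * ε ^ 2 < μ)
    (hnn : ∀ x ∈ cube c L, 0 ≤ v x) (hsuper : ∀ x ∈ cube c L, μ * v x ≤ -lapPi v x) :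
    ∫ x in cube c L, v x * cosBump ε c x ≤ 0 := by
  have hdiv (x : Fin (n + 1) → ℝ) (hx : x ∈ cube c L) :=
    divergence_greenField_cosBump (hv.contDiffAt (hU.mem_nhds (hQ hx))) ε c
  have hcont : ContinuousOn (fun x => v x * cosBump ε c x) (cube c L) :=
    (hv.continuousOn.mono hQ).mul (contDiff_cosBump ε c).continuous.continuousOn
  have hint : IntegrableOn (fun x => v x * cosBump ε c x) (cube c L) :=
    hcont.integrableOn_compact isCompact_Icc
  have hint_div : IntegrableOn (fun x => ∑ i, partialDeriv i (greenField v (cosBump ε c) i) x)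
      (cube c L) := by
    refine ContinuousOn.integrableOn_compact isCompact_Icc ?_ |>.congr_fun
      (fun x hx => (hdiv x hx).symm) measurableSet_Icc
    exact (continuousOn_const.mul hcont).sub ((contDiff_cosBump ε c).continuous.continuousOn.mul
      ((hv.continuousOn_lapPi hU).mono hQ))
  have hlower (x : Fin (n + 1) → ℝ) (hx : x ∈ cube c L) :
      (μ - (n + 1) * ε ^ 2) * (v x * cosBump ε c x) ≤
        ∑ i, partialDeriv i (greenField v (cosBump ε c) i) x := by
    rw [hdiv x hx]
    have := mul_le_mul_of_nonneg_left (hsuper x hx) (cosBump_nonneg hε hεL hx)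
    push_cast
    linarith
  refine nonpos_of_mul_nonpos_right ?_ (sub_pos.2 hμ)
  rw [← integral_const_mul]
  exact (setIntegral_mono_on (hint.const_mul _) hint_div measurableSet_Icc hlower).trans
    (integral_divergence_greenField_cosBump_nonpos hU hv hQ hε hεL hnn hint_div)

theorem eq_zero_of_le_neg_lapPi_on_cube (hU : IsOpen U) (hv : ContDiffOn ℝ 2 v U)
    (hQ : cube c L ⊆ U) (hε : 0 < ε) (hεL : ε * L = π / 2) (hμ : (n + 1) * ε ^ 2 < μ)
    (hnn : ∀ x ∈ cube c L, 0 ≤ v x) (hsuper : ∀ x ∈ cube c L, μ * v x ≤ -lapPi v x)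
    {x₀ : Fin (n + 1) → ℝ} (hx₀ : ∀ j, |x₀ j - c j| < L) : v x₀ = 0 := by
  by_contra hne
  have hcont : ContinuousOn (fun x => v x * cosBump ε c x) (cube c L) :=
    (hv.continuousOn.mono hQ).mul (contDiff_cosBump ε c).continuous.continuousOn
  have hpos := setIntegral_pos_of_mem_interior (μ := volume) measurableSet_Icc hcont
    (hcont.integrableOn_compact isCompact_Icc)
    (fun x hx => mul_nonneg (hnn x hx) (cosBump_nonneg hε hεL hx)) (mem_interior_cube hx₀)
    (mul_ne_zero hne (cosBump_pos hε hεL hx₀).ne')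
  exact hpos.not_ge (integral_mul_cosBump_nonpos hU hv hQ hε hεL hμ hnn hsuper)

end Cube

theorem exists_cube_subset_halfSpace {n : ℕ} (lst : Fin n) {L : ℝ} (hL : 0 < L)
    {x₀ : Fin n → ℝ} (hx₀ : 0 < x₀ lst) :
    ∃ c, cube c L ⊆ {x | 0 < x lst} ∧ ∀ j, |x₀ j - c j| < L := by
  set δ := min (x₀ lst) L / 2 with hδ_def
  have hδ : 0 < δ := by positivity
  have hδx : δ < x₀ lst := by linarith [min_le_left (x₀ lst) L]
  have hδL : δ < L := by linarith [min_le_right (x₀ lst) L]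
  refine ⟨Function.update x₀ lst (x₀ lst + (L - δ)), fun x hx => ?_, fun j => ?_⟩
  · have := hx.1 lst
    simp only [Function.update_self] at this
    show 0 < x lst
    linarith
  · rcases eq_or_ne j lst with rfl | hj
    · rw [Function.update_self, sub_add_cancel_left, abs_neg, abs_of_pos (by linarith)]
      linarith
    · rwa [Function.update_of_ne hj, sub_self, abs_zero]

theorem eq_zero_of_le_neg_lapPi_on_halfSpace {n : ℕ} (lst : Fin (n + 1))
    {v : (Fin (n + 1) → ℝ) → ℝ} (hv : ContDiffOn ℝ 2 v {x | 0 < x lst})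
    (hnn : ∀ x, 0 < x lst → 0 ≤ v x)
    (hsuper : ∀ x, 0 < x lst → v x ≤ -lapPi v x) {x₀ : Fin (n + 1) → ℝ} (hx₀ : 0 < x₀ lst) :
    v x₀ = 0 := by
  set ε : ℝ := 1 / (n + 2)
  have hε : 0 < ε := by positivity
  have hμ : (n + 1) * ε ^ 2 < 1 := by
    rw [div_pow, one_pow, mul_one_div, div_lt_one (by positivity)]
    nlinarith
  have hεL : ε * (π / (2 * ε)) = π / 2 := by field_simp
  obtain ⟨c, hQ, hc⟩ := exists_cube_subset_halfSpace lst (by positivity : 0 < π / (2 * ε)) hx₀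
  exact eq_zero_of_le_neg_lapPi_on_cube (isOpen_lt continuous_const (continuous_apply lst)) hv hQ
    hε hεL hμ (fun x hx => hnn x (hQ hx))
    (fun x hx => (one_mul (v x)).trans_le (hsuper x (hQ hx))) hc

theorem stmt9_general (N : ℕ) (lst : Fin N)
    (u : EuclideanSpace ℝ (Fin N) → ℝ)
    (hu : ContDiffOn ℝ 2 u {x : EuclideanSpace ℝ (Fin N) | 0 < x lst})
    (hnn : ∀ x : EuclideanSpace ℝ (Fin N), 0 < x lst → 0 ≤ u x)
    (hineq : ∀ x : EuclideanSpace ℝ (Fin N), 0 < x lst → u x ≤ - lap u x) :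
    (∀ x : EuclideanSpace ℝ (Fin N), 0 < x lst → u x = 0) ∧
    ¬ (∀ x : EuclideanSpace ℝ (Fin N), 0 < x lst → 0 < u x) := by
  obtain ⟨n, rfl⟩ := Nat.exists_eq_add_one_of_ne_zero lst.pos.ne'
  set e := EuclideanSpace.equiv (Fin (n + 1)) ℝ
  have hzero (x : EuclideanSpace ℝ (Fin (n + 1))) (hx : 0 < x lst) : u x = 0 := by
    simpa using eq_zero_of_le_neg_lapPi_on_halfSpace lst (v := u ∘ e.symm)
      (hu.comp e.symm.contDiff.contDiffOn fun y hy => hy) (fun y hy => hnn (e.symm y) hy)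
      (fun y hy => lap_eq_lapPi u y ▸ hineq (e.symm y) hy) (x₀ := e x) hx
  have hpt : 0 < EuclideanSpace.single lst (1 : ℝ) lst := by simp
  exact ⟨hzero, fun hpos => (hpos _ hpt).ne' (hzero _ hpt)⟩

/-- For N ≥ 2, any nonnegative C² solution of `-Δu ≥ u` in the upper
half-space is identically zero; in particular there is no positive solution. -/
theorem stmt9 (N : ℕ) (hN : 2 ≤ N) (lst : Fin N) (hlst : (lst : ℕ) = N - 1)
    (u : EuclideanSpace ℝ (Fin N) → ℝ)
    (hu : ContDiffOn ℝ 2 u {x : EuclideanSpace ℝ (Fin N) | 0 < x lst})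
    (hnn : ∀ x : EuclideanSpace ℝ (Fin N), 0 < x lst → 0 ≤ u x)
    (hineq : ∀ x : EuclideanSpace ℝ (Fin N), 0 < x lst → u x ≤ - lap u x) :
    (∀ x : EuclideanSpace ℝ (Fin N), 0 < x lst → u x = 0) ∧
    ¬ (∀ x : EuclideanSpace ℝ (Fin N), 0 < x lst → 0 < u x) :=
  stmt9_general N lst u hu hnn hineq
end

section
/- Let u₀ : [0,∞) → [0,∞) be a bounded C² function with u₀(0) = 0, u₀ > 0 on (0,∞), and -u₀'' = f(u₀) on (0,∞), where f : [0,∞) → ℝ is nonnegative, convex, f(0) = 0. Then no such u₀ exists (the hypotheses are contradictory). -/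
/-! The equation makes `u₀` concave, and a concave function bounded below on a half-line is
nondecreasing. A convex `f ≥ 0` with `f 0 = 0` is nondecreasing as well, so if `f (u₀ t) > 0` then
`u₀'' ≤ -f (u₀ t) < 0` from `t` on, which drives `u₀'` below zero. Hence `u₀'' = 0` on `(0, ∞)`, so
`u₀` is convex there, and being bounded above it is nonincreasing: `u₀ 1 ≤ u₀ 0 = 0`. -/

open Set

lemma ConvexOn.monotoneOn_Ici_of_isMinOn {f : ℝ → ℝ} {a : ℝ} (hf : ConvexOn ℝ (Ici a) f)
    (hmin : IsMinOn f (Ici a) a) : MonotoneOn f (Ici a) := by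
  intro x hx y hy hxy
  have hx_seg : x ∈ segment ℝ a y := by
    rw [segment_eq_Icc (le_trans hx hxy)]
    exact ⟨hx, hxy⟩
  calc f x ≤ max (f a) (f y) := hf.le_on_segment self_mem_Ici hy hx_seg
    _ = f y := max_eq_right (hmin hy)

section HalfLine

variable {g : ℝ → ℝ} {a c : ℝ}

lemma nonpos_of_bddAbove_of_le_deriv (hg : ContinuousOn g (Ici a))
    (hg' : DifferentiableOn ℝ g (Ioi a)) (hderiv : ∀ x ∈ Ioi a, c ≤ deriv g x)
    (hbdd : BddAbove (g '' Ici a)) : c ≤ 0 := by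
  by_contra! hc
  obtain ⟨M, hM⟩ := hbdd
  have hgrowth : ∀ x ∈ Ici a, c * (x - a) ≤ g x - g a :=
    fun x hx => (convex_Ici a).mul_sub_le_image_sub_of_le_deriv hg (by rwa [interior_Ici])
      (by rwa [interior_Ici]) a self_mem_Ici x hx hx
  have hMa : g a ≤ M := hM (mem_image_of_mem g self_mem_Ici)
  set x := a + (M - g a + 1) / c
  have hax : a ≤ x := le_add_of_nonneg_right (div_nonneg (by linarith) hc.le)
  have hcx : c * (x - a) = M - g a + 1 := by
    simp only [x, add_sub_cancel_left]
    field_simp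
  linarith [hgrowth x hax, hM (mem_image_of_mem g hax)]

lemma nonpos_of_bddBelow_of_deriv_le_neg (hg : ContinuousOn g (Ici a))
    (hg' : DifferentiableOn ℝ g (Ioi a)) (hderiv : ∀ x ∈ Ioi a, deriv g x ≤ -c)
    (hbdd : BddBelow (g '' Ici a)) : c ≤ 0 := by
  obtain ⟨m, hm⟩ := hbdd
  refine nonpos_of_bddAbove_of_le_deriv hg.neg hg'.neg (fun x hx => ?_) ⟨-m, ?_⟩
  · rw [deriv.neg]
    linarith [hderiv x hx]
  · rintro _ ⟨x, hx, rfl⟩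
    exact neg_le_neg (hm (mem_image_of_mem g hx))

lemma deriv_nonneg_of_bddBelow_of_deriv_deriv_nonpos (hg : ContinuousOn g (Ici a))
    (hg' : DifferentiableOn ℝ g (Ioi a)) (hg'' : DifferentiableOn ℝ (deriv g) (Ioi a))
    (hconcave : ∀ x ∈ Ioi a, deriv (deriv g) x ≤ 0) (hbdd : BddBelow (g '' Ici a)) :
    ∀ x ∈ Ioi a, 0 ≤ deriv g x := by
  have hanti : AntitoneOn (deriv g) (Ioi a) :=
    antitoneOn_of_deriv_nonpos (convex_Ioi a) hg''.continuousOn (by rwa [interior_Ioi])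
      (by rwa [interior_Ioi])
  intro x hx
  have hsub : Ici x ⊆ Ici a := Ici_subset_Ici.2 (le_of_lt hx)
  refine neg_nonpos.1 <| nonpos_of_bddBelow_of_deriv_le_neg (hg.mono hsub)
    (hg'.mono (Ioi_subset_Ioi (le_of_lt hx))) (fun y hy => ?_) (hbdd.mono (image_mono hsub))
  rw [neg_neg]
  exact hanti hx (mem_Ioi.2 (lt_trans hx hy)) (le_of_lt hy)

lemma deriv_nonpos_of_bddAbove_of_deriv_deriv_nonneg (hg : ContinuousOn g (Ici a))
    (hg' : DifferentiableOn ℝ g (Ioi a)) (hg'' : DifferentiableOn ℝ (deriv g) (Ioi a))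
    (hconvex : ∀ x ∈ Ioi a, 0 ≤ deriv (deriv g) x) (hbdd : BddAbove (g '' Ici a)) :
    ∀ x ∈ Ioi a, deriv g x ≤ 0 := by
  have hmono : MonotoneOn (deriv g) (Ioi a) :=
    monotoneOn_of_deriv_nonneg (convex_Ioi a) hg''.continuousOn (by rwa [interior_Ioi])
      (by rwa [interior_Ioi])
  intro x hx
  have hsub : Ici x ⊆ Ici a := Ici_subset_Ici.2 (le_of_lt hx)
  exact nonpos_of_bddAbove_of_le_deriv (hg.mono hsub) (hg'.mono (Ioi_subset_Ioi (le_of_lt hx)))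
    (fun y hy => hmono hx (mem_Ioi.2 (lt_trans hx hy)) (le_of_lt hy)) (hbdd.mono (image_mono hsub))

lemma eq_zero_of_nonneg_of_deriv_le_neg {h : ℝ → ℝ} (hg : DifferentiableOn ℝ g (Ioi a))
    (hg_nonneg : ∀ x ∈ Ioi a, 0 ≤ g x) (hh : MonotoneOn h (Ioi a))
    (hh_nonneg : ∀ x ∈ Ioi a, 0 ≤ h x) (hderiv : ∀ x ∈ Ioi a, deriv g x ≤ -h x) :
    ∀ x ∈ Ioi a, h x = 0 := by
  intro x hx
  have hsub : Ici x ⊆ Ioi a := fun y hy => mem_Ioi.2 (hx.trans_le hy)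
  refine le_antisymm (nonpos_of_bddBelow_of_deriv_le_neg (hg.continuousOn.mono hsub)
    (hg.mono (Ioi_subset_Ioi (le_of_lt hx))) (fun y hy => ?_) ⟨0, ?_⟩) (hh_nonneg x hx)
  · have hy_mem : y ∈ Ioi a := hsub (Ioi_subset_Ici_self hy)
    exact (hderiv y hy_mem).trans (neg_le_neg (hh hx hy_mem (le_of_lt hy)))
  · rintro _ ⟨y, hy, rfl⟩
    exact hg_nonneg y (hsub hy)

end HalfLine

theorem stmt18_general (f : ℝ → ℝ)
    (hfnn : ∀ t : ℝ, 0 ≤ t → 0 ≤ f t)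
    (hfconv : ConvexOn ℝ (Ici 0) f) (hf0 : f 0 = 0)
    (u₀ : ℝ → ℝ) (hu₀ : ContDiffOn ℝ 2 u₀ (Ici 0))
    (hval : ∀ t ∈ Ici (0:ℝ), 0 ≤ u₀ t)
    (hbdd : ∃ M : ℝ, ∀ t ∈ Ici (0:ℝ), u₀ t ≤ M)
    (hzero : u₀ 0 = 0)
    (hpos : ∀ t ∈ Ioi (0:ℝ), 0 < u₀ t)
    (hode : ∀ t ∈ Ioi (0:ℝ), - deriv (deriv u₀) t = f (u₀ t)) :
    False := by
  obtain ⟨M, hM⟩ := hbdd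
  have hu : ContinuousOn u₀ (Ici 0) := hu₀.continuousOn
  have hu' : DifferentiableOn ℝ u₀ (Ioi 0) :=
    (hu₀.mono Ioi_subset_Ici_self).differentiableOn two_ne_zero
  have hu'' : DifferentiableOn ℝ (deriv u₀) (Ioi 0) :=
    ((hu₀.mono Ioi_subset_Ici_self).deriv_of_isOpen (m := 1) isOpen_Ioi le_rfl).differentiableOn
      one_ne_zero
  have hf_mono : MonotoneOn f (Ici 0) :=
    hfconv.monotoneOn_Ici_of_isMinOn fun t ht => by simpa [hf0] using hfnn t ht
  have hu'_nonneg : ∀ t ∈ Ioi 0, 0 ≤ deriv u₀ t :=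
    deriv_nonneg_of_bddBelow_of_deriv_deriv_nonpos hu hu' hu''
      (fun t ht => by linarith [hode t ht, hfnn _ (hval t (Ioi_subset_Ici_self ht))])
      ⟨0, by rintro _ ⟨t, ht, rfl⟩; exact hval t ht⟩
  have hu_mono : MonotoneOn u₀ (Ici 0) :=
    monotoneOn_of_deriv_nonneg (convex_Ici 0) hu (by rwa [interior_Ici]) (by rwa [interior_Ici])
  have hfu : ∀ t ∈ Ioi 0, f (u₀ t) = 0 :=
    eq_zero_of_nonneg_of_deriv_le_neg hu'' hu'_nonneg
      ((hf_mono.comp hu_mono hval).mono Ioi_subset_Ici_self)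
      (fun t ht => hfnn _ (hval t (Ioi_subset_Ici_self ht))) (fun t ht => by linarith [hode t ht])
  have hu'_nonpos : ∀ t ∈ Ioi 0, deriv u₀ t ≤ 0 :=
    deriv_nonpos_of_bddAbove_of_deriv_deriv_nonneg hu hu' hu''
      (fun t ht => by linarith [hode t ht, hfu t ht]) ⟨M, by rintro _ ⟨t, ht, rfl⟩; exact hM t ht⟩
  have hu_anti : AntitoneOn u₀ (Ici 0) :=
    antitoneOn_of_deriv_nonpos (convex_Ici 0) hu (by rwa [interior_Ici]) (by rwa [interior_Ici])
  linarith [hpos 1 (mem_Ioi.2 one_pos), hu_anti self_mem_Ici (mem_Ici.2 zero_le_one) zero_le_one]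

/-- There is no bounded C² function u₀ : [0,∞) → [0,∞) with u₀(0) = 0,
u₀ > 0 on (0,∞), solving -u₀'' = f(u₀) on (0,∞) for a nonnegative convex f with
f(0) = 0. -/
theorem stmt18 (f : ℝ → ℝ) (hf : ContinuousOn f (Ici 0))
    (hfnn : ∀ t : ℝ, 0 ≤ t → 0 ≤ f t)
    (hfconv : ConvexOn ℝ (Ici 0) f) (hf0 : f 0 = 0)
    (u₀ : ℝ → ℝ) (hu₀ : ContDiffOn ℝ 2 u₀ (Ici 0))
    (hval : ∀ t ∈ Ici (0:ℝ), 0 ≤ u₀ t)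
    (hbdd : ∃ M : ℝ, ∀ t ∈ Ici (0:ℝ), u₀ t ≤ M)
    (hzero : u₀ 0 = 0)
    (hpos : ∀ t ∈ Ioi (0:ℝ), 0 < u₀ t)
    (hode : ∀ t ∈ Ioi (0:ℝ), - deriv (deriv u₀) t = f (u₀ t)) :
    False :=
  stmt18_general f hfnn hfconv hf0 u₀ hu₀ hval hbdd hzero hpos hode
end
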